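/- Under the splitting matching relation with t <_Λ l ⇒ S and ⊥ ∉ S, if x is a safe splitting variable of t along l (i.e. there is p ∈ S with t|_p = x and l|_p is either a rule variable or a constructor application) and σ is a substitution mapping x to a constructor application c(z₁,…,z_k) with fresh variables, then dist(tσ, l) < dist(t, l). -/

import Mathlib

/-- First-order terms: variables, constants and (binary) application. -/
inductive Tm
  | var (x : ℕ)
  | const (c : ℕ)
  | app (a b : Tm)
deriving DecidableEq

/-- The size of a term. -/
def Tm.size : Tm → ℕ
  | .var _ => 1
  | .const _ => 1
  | .app a b => a.size + b.size + 1

/-- Free variables of a term. -/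
def Tm.fv : Tm → Finset ℕ
  | .var x => {x}
  | .const _ => ∅
  | .app a b => a.fv ∪ b.fv

/-- The subterm at a position (positions are lists of booleans). -/
def subtermAt : Tm → List Bool → Option Tm
  | t, [] => some t
  | .app a _, false :: p => subtermAt a p
  | .app _ b, true :: p => subtermAt b p
  | _, _ => none

/-- |t|_p: the size of the subterm of t at position p (0 at invalid positions). -/
def sizeAt (t : Tm) (p : List Bool) : ℕ := (subtermAt t p).elim 0 Tm.size

/-- The splitting matching relation `t₁ <_p t₂ ⇒ S`, parametrized by the sets
Δ₁, Δ₂ of substitutable variables; `none` plays the role of ⊥. -/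
inductive SM (Δ1 Δ2 : Finset ℕ) : Tm → Tm → List Bool → Finset (Option (List Bool)) → Prop
  | appApp {a a' b b' : Tm} {p S1 S2} :
      SM Δ1 Δ2 a a' (p ++ [false]) S1 → SM Δ1 Δ2 b b' (p ++ [true]) S2 →
      SM Δ1 Δ2 (.app a b) (.app a' b') p (S1 ∪ S2)
  | constEq (c : ℕ) (p : List Bool) : SM Δ1 Δ2 (.const c) (.const c) p ∅
  | constNe {c c' : ℕ} (p : List Bool) : c ≠ c' → SM Δ1 Δ2 (.const c) (.const c') p {none}
  | appConst (a b : Tm) (c : ℕ) (p : List Bool) : SM Δ1 Δ2 (.app a b) (.const c) p {none}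
  | constApp (c : ℕ) (a b : Tm) (p : List Bool) : SM Δ1 Δ2 (.const c) (.app a b) p {none}
  | varSub {x t2 p} : x ∈ Δ1 → (∀ y, t2 = Tm.var y → y ∈ Δ2) →
      SM Δ1 Δ2 (.var x) t2 p {some p}
  | varSubRigid {x y : ℕ} (p : List Bool) : x ∈ Δ1 → y ∉ Δ2 →
      SM Δ1 Δ2 (.var x) (.var y) p {none}
  | varRigidEq {x : ℕ} (p : List Bool) : x ∉ Δ1 → SM Δ1 Δ2 (.var x) (.var x) p ∅
  | varRigidNe {x : ℕ} {t2 : Tm} (p : List Bool) : x ∉ Δ1 → t2 ≠ Tm.var x →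
      SM Δ1 Δ2 (.var x) t2 p {none}
  | rigidVar2 {t1 : Tm} {y : ℕ} (p : List Bool) : (∀ x, t1 ≠ Tm.var x) → y ∈ Δ2 →
      SM Δ1 Δ2 t1 (.var y) p ∅
  | badVar2 {t1 : Tm} {y : ℕ} (p : List Bool) : (∀ x, t1 ≠ Tm.var x) → y ∉ Δ2 →
      SM Δ1 Δ2 t1 (.var y) p {none}

/-- The distance associated with a splitting-matching result S against t₂:
0 if ⊥ ∈ S, otherwise the sum of the sizes |t₂|_p over p ∈ S. -/
def dist (t2 : Tm) (S : Finset (Option (List Bool))) : ℕ :=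
  if none ∈ S then 0 else S.sum (fun q => q.elim 0 (sizeAt t2))

/-- Application of a substitution. -/
def subst (γ : ℕ → Tm) : Tm → Tm
  | .var x => γ x
  | .const c => .const c
  | .app a b => .app (subst γ a) (subst γ b)

/-- The head constant of a term. -/
def headConst : Tm → Option ℕ
  | .var _ => none
  | .const c => some c
  | .app a _ => headConst a

/-- Constructor patterns c(z₁,…,z_k): a constructor from Cs applied to fresh
variables. -/
inductive ConstrPat (Cs fresh : Finset ℕ) : Tm → Prop
  | base {c} : c ∈ Cs → ConstrPat Cs fresh (.const c)
  | step {t y} : ConstrPat Cs fresh t → y ∈ fresh → ConstrPat Cs fresh (.app t (.var y))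

/-!
The splitting matching relation is functional, so `S` and `S'` are both computed by
`splitMatch`. As `⊥ ∉ S`, each substitutable variable `y` of `t` meets a whole subterm `l|_q`
and contributes `|l|_q|` to the distance. After substitution, `σ y` contributes at most
`|l|_q|`, since matching any term against `l|_q` only collects positions of disjoint proper
subterms or the root; and strictly less when `σ y` is not a variable, because then the root is
not collected. Rigid variables are left alone by `σ` and stay rigid, so no other part of the
distance grows, and at the position of `x` it drops.
-/

def appPositions (Sa Sb : Finset (Option (List Bool))) : Finset (Option (List Bool)) :=
  Sa.image (Option.map (false :: ·)) ∪ Sb.image (Option.map (true :: ·))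

section appPositions

variable {Sa Sb : Finset (Option (List Bool))}

@[simp]
lemma none_mem_appPositions : none ∈ appPositions Sa Sb ↔ none ∈ Sa ∨ none ∈ Sb := by
  simp [appPositions]

@[simp]
lemma some_cons_mem_appPositions {b : Bool} {r : List Bool} :
    some (b :: r) ∈ appPositions Sa Sb ↔ some r ∈ cond b Sb Sa := by
  cases b <;> simp [appPositions]

lemma dist_appPositions (a' b' : Tm) (ha : none ∉ Sa) (hb : none ∉ Sb) :
    dist (.app a' b') (appPositions Sa Sb) = dist a' Sa + dist b' Sb := by
  have hinj (c : Bool) : Function.Injective (Option.map (c :: ·)) :=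
    Option.map_injective (List.cons_injective)
  have hdisj :
      Disjoint (Sa.image (Option.map (false :: ·))) (Sb.image (Option.map (true :: ·))) := by
    simp only [Finset.disjoint_left, Finset.mem_image, not_exists, not_and]
    rintro _ ⟨(_ | r), hr, rfl⟩ (_ | r') hr' h <;> simp_all
  unfold _root_.dist
  rw [if_neg (by simp [ha, hb]), if_neg ha, if_neg hb, appPositions,
    Finset.sum_union hdisj, Finset.sum_image (hinj false).injOn,
    Finset.sum_image (hinj true).injOn]
  congr 1 <;> refine Finset.sum_congr rfl fun q _ => ?_ <;> cases q <;> rfl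

lemma dist_appPositions_le (a' b' : Tm) :
    dist (.app a' b') (appPositions Sa Sb) ≤ dist a' Sa + dist b' Sb := by
  by_cases h : none ∈ Sa ∨ none ∈ Sb
  · simp [_root_.dist, h]
  · rw [not_or] at h
    exact (dist_appPositions a' b' h.1 h.2).le

end appPositions

def splitMatch (Δ1 Δ2 : Finset ℕ) : Tm → Tm → Finset (Option (List Bool))
  | .var x, .var y =>
      if x ∈ Δ1 then (if y ∈ Δ2 then {some []} else {none})
      else if y = x then ∅ else {none}
  | .var x, .const _ => if x ∈ Δ1 then {some []} else {none}
  | .var x, .app _ _ => if x ∈ Δ1 then {some []} else {none}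
  | .const _, .var y => if y ∈ Δ2 then ∅ else {none}
  | .const c, .const c' => if c = c' then ∅ else {none}
  | .const _, .app _ _ => {none}
  | .app _ _, .var y => if y ∈ Δ2 then ∅ else {none}
  | .app _ _, .const _ => {none}
  | .app a b, .app a' b' =>
      appPositions (splitMatch Δ1 Δ2 a a') (splitMatch Δ1 Δ2 b b')

lemma SM.eq_image_splitMatch {Δ1 Δ2 : Finset ℕ} {t l : Tm} {p : List Bool}
    {S : Finset (Option (List Bool))} (h : SM Δ1 Δ2 t l p S) :
    S = (splitMatch Δ1 Δ2 t l).image (Option.map (p ++ ·)) := by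
  induction h with
  | appApp _ _ iha ihb =>
    simp only [splitMatch, appPositions, iha, ihb, Finset.image_union, Finset.image_image,
      Option.map_comp_map]
    congr 3 <;> funext r <;> simp
  | @varSub _ t2 _ => cases t2 <;> simp_all [splitMatch]
  | @varRigidNe _ t2 _ _ h => cases t2 <;> simp_all [splitMatch, eq_comm]
  | @rigidVar2 t1 _ _ h | @badVar2 t1 _ _ h => cases t1 <;> simp_all [splitMatch]
  | _ => simp_all [splitMatch]

lemma SM.eq_splitMatch {Δ1 Δ2 : Finset ℕ} {t l : Tm} {S : Finset (Option (List Bool))}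
    (h : SM Δ1 Δ2 t l [] S) : S = splitMatch Δ1 Δ2 t l := by
  simpa using h.eq_image_splitMatch

lemma Tm.size_pos (t : Tm) : 0 < t.size := by
  cases t <;> simp [Tm.size]

lemma dist_some_nil (l : Tm) : dist l {some []} = l.size := by
  simp [_root_.dist, sizeAt, subtermAt]

section splitMatch

variable {Δ1 Δ2 : Finset ℕ}

lemma dist_splitMatch_const (c : ℕ) (l : Tm) : dist l (splitMatch Δ1 Δ2 (.const c) l) = 0 := by
  cases l <;> simp only [splitMatch] <;> (try split_ifs) <;> simp [_root_.dist]

lemma dist_splitMatch_le_size (s l : Tm) : dist l (splitMatch Δ1 Δ2 s l) ≤ l.size := by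
  induction s generalizing l with
  | var z =>
    cases l <;> simp only [splitMatch] <;> split_ifs <;>
      simp [_root_.dist, sizeAt, subtermAt, Tm.size]
  | const c => simp [dist_splitMatch_const]
  | app a b iha ihb =>
    cases l with
    | app a' b' =>
      calc dist (.app a' b') (splitMatch Δ1 Δ2 (.app a b) (.app a' b'))
          ≤ dist a' (splitMatch Δ1 Δ2 a a') + dist b' (splitMatch Δ1 Δ2 b b') :=
            dist_appPositions_le a' b'
        _ ≤ (Tm.app a' b').size := (add_le_add (iha a') (ihb b')).trans (Nat.le_succ _)
    | _ => simp only [splitMatch]; (try split_ifs) <;> simp [_root_.dist]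

lemma dist_splitMatch_lt_size {s : Tm} (hs : ∀ z, s ≠ .var z) (l : Tm) :
    dist l (splitMatch Δ1 Δ2 s l) < l.size := by
  cases s with
  | var z => exact absurd rfl (hs z)
  | const c => simpa [dist_splitMatch_const] using l.size_pos
  | app a b =>
    cases l with
    | app a' b' =>
      calc dist (.app a' b') (splitMatch Δ1 Δ2 (.app a b) (.app a' b'))
          ≤ dist a' (splitMatch Δ1 Δ2 a a') + dist b' (splitMatch Δ1 Δ2 b b') :=
            dist_appPositions_le a' b'
        _ < (Tm.app a' b').size :=
            Nat.lt_succ_of_le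
              (add_le_add (dist_splitMatch_le_size a a') (dist_splitMatch_le_size b b'))
    | _ => simp only [splitMatch]; (try split_ifs) <;> simp [_root_.dist, Tm.size]

lemma splitMatch_var_of_mem {y : ℕ} {l : Tm} (hy : y ∈ Δ1)
    (h : none ∉ splitMatch Δ1 Δ2 (.var y) l) : splitMatch Δ1 Δ2 (.var y) l = {some []} := by
  cases l <;> simp only [splitMatch, if_pos hy] at h ⊢
  split_ifs at h ⊢ <;> simp_all

lemma splitMatch_var_of_notMem {y : ℕ} {l : Tm} (hy : y ∉ Δ1) :
    splitMatch Δ1 Δ2 (.var y) l = if l = .var y then ∅ else {none} := by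
  cases l <;> simp [splitMatch, hy]

variable {Δ1' : Finset ℕ} {σ : ℕ → Tm}

lemma dist_splitMatch_subst_le (t l : Tm)
    (hσ : ∀ y ∈ t.fv, y ∉ Δ1 → σ y = .var y ∧ y ∉ Δ1') (hS : none ∉ splitMatch Δ1 Δ2 t l) :
    dist l (splitMatch Δ1' Δ2 (subst σ t) l) ≤ dist l (splitMatch Δ1 Δ2 t l) := by
  induction t generalizing l with
  | var y =>
    by_cases hy : y ∈ Δ1
    · rw [splitMatch_var_of_mem hy hS, dist_some_nil]
      exact dist_splitMatch_le_size _ _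
    · obtain ⟨hσy, hy'⟩ := hσ y (Finset.mem_singleton_self y) hy
      rw [subst, hσy, splitMatch_var_of_notMem hy, splitMatch_var_of_notMem hy']
  | const c => simp [subst, dist_splitMatch_const]
  | app a b iha ihb =>
    cases l with
    | app a' b' =>
      simp only [splitMatch, none_mem_appPositions, not_or] at hS
      calc dist (.app a' b') (splitMatch Δ1' Δ2 (subst σ (.app a b)) (.app a' b'))
          ≤ dist a' (splitMatch Δ1' Δ2 (subst σ a) a') +
              dist b' (splitMatch Δ1' Δ2 (subst σ b) b') :=
            dist_appPositions_le a' b'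
        _ ≤ dist a' (splitMatch Δ1 Δ2 a a') + dist b' (splitMatch Δ1 Δ2 b b') :=
            add_le_add (iha a' (fun y hy => hσ y (Finset.mem_union_left _ hy)) hS.1)
              (ihb b' (fun y hy => hσ y (Finset.mem_union_right _ hy)) hS.2)
        _ = dist (.app a' b') (splitMatch Δ1 Δ2 (.app a b) (.app a' b')) :=
            (dist_appPositions a' b' hS.1 hS.2).symm
    | _ => exact le_rfl

lemma dist_splitMatch_subst_lt (t l : Tm) {x : ℕ} {r : List Bool}
    (hσ : ∀ y ∈ t.fv, y ∉ Δ1 → σ y = .var y ∧ y ∉ Δ1') (hx : ∀ z, σ x ≠ .var z)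
    (hS : none ∉ splitMatch Δ1 Δ2 t l) (hr : some r ∈ splitMatch Δ1 Δ2 t l)
    (hxr : subtermAt t r = some (.var x)) :
    dist l (splitMatch Δ1' Δ2 (subst σ t) l) < dist l (splitMatch Δ1 Δ2 t l) := by
  induction t generalizing l r with
  | var y =>
    obtain ⟨rfl, rfl⟩ : r = [] ∧ y = x := by cases r <;> simp_all [subtermAt]
    have hy : y ∈ Δ1 := by
      by_contra hy
      rw [splitMatch_var_of_notMem hy] at hr
      split_ifs at hr <;> simp at hr
    rw [splitMatch_var_of_mem hy hS, dist_some_nil]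
    exact dist_splitMatch_lt_size hx l
  | const c => cases r <;> simp [subtermAt] at hxr
  | app a b iha ihb =>
    cases l with
    | app a' b' =>
      simp only [splitMatch, none_mem_appPositions, not_or] at hS hr
      have hσa : ∀ y ∈ a.fv, y ∉ Δ1 → σ y = .var y ∧ y ∉ Δ1' :=
        fun y hy => hσ y (Finset.mem_union_left _ hy)
      have hσb : ∀ y ∈ b.fv, y ∉ Δ1 → σ y = .var y ∧ y ∉ Δ1' :=
        fun y hy => hσ y (Finset.mem_union_right _ hy)
      calc dist (.app a' b') (splitMatch Δ1' Δ2 (subst σ (.app a b)) (.app a' b'))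
          ≤ dist a' (splitMatch Δ1' Δ2 (subst σ a) a') +
              dist b' (splitMatch Δ1' Δ2 (subst σ b) b') :=
            dist_appPositions_le a' b'
        _ < dist a' (splitMatch Δ1 Δ2 a a') + dist b' (splitMatch Δ1 Δ2 b b') := by
          rcases r with _ | ⟨_ | _, r⟩
          · simp [subtermAt] at hxr
          · exact add_lt_add_of_lt_of_le (iha a' hσa hS.1 (by simpa using hr) hxr)
              (dist_splitMatch_subst_le b b' hσb hS.2)
          · exact add_lt_add_of_le_of_lt (dist_splitMatch_subst_le a a' hσa hS.1)
              (ihb b' hσb hS.2 (by simpa using hr) hxr)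
        _ = dist (.app a' b') (splitMatch Δ1 Δ2 (.app a b) (.app a' b')) :=
            (dist_appPositions a' b' hS.1 hS.2).symm
    | _ =>
      simp only [splitMatch] at hr
      (try split_ifs at hr) <;> simp at hr

end splitMatch

lemma ConstrPat.ne_var {Cs fresh : Finset ℕ} {s : Tm} (h : ConstrPat Cs fresh s) (z : ℕ) :
    s ≠ .var z := by
  cases h <;> simp

theorem dist_after_splitting_decreases_general
    (Δ1 Δ2 Cs fresh : Finset ℕ) (t l : Tm)
    (S S' : Finset (Option (List Bool)))
    (σ : ℕ → Tm) (x : ℕ) (hx1 : x ∈ Δ1)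
    (hS : SM Δ1 Δ2 t l [] S) (hbot : none ∉ S)
    (p : List Bool) (hp : some p ∈ S) (hxt : subtermAt t p = some (Tm.var x))
    (hσx : ConstrPat Cs fresh (σ x))
    (hσid : ∀ y, y ≠ x → σ y = Tm.var y)
    (hfresh : ∀ y ∈ fresh, y ∉ t.fv ∪ l.fv ∪ Δ1 ∪ Δ2)
    (hS' : SM ((Δ1.erase x) ∪ fresh) Δ2 (subst σ t) l [] S') :
    dist l S' < dist l S := by
  rw [hS.eq_splitMatch] at hbot hp ⊢
  rw [hS'.eq_splitMatch]
  have hσ : ∀ y ∈ t.fv, y ∉ Δ1 → σ y = .var y ∧ y ∉ Δ1.erase x ∪ fresh := by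
    intro y hyt hyΔ
    have hyx : y ≠ x := fun h => hyΔ (h ▸ hx1)
    have hyfresh : y ∉ fresh := fun hy => hfresh y hy (by simp [hyt])
    exact ⟨hσid y hyx, by simp [hyΔ, hyfresh]⟩
  exact dist_splitMatch_subst_lt t l hσ hσx.ne_var hbot hp hxt

/-- Distance strictly decreases after splitting along a safe splitting
variable x: if t <_Λ l ⇒ S with ⊥ ∉ S, some p ∈ S has t|_p = x and l|_p is a
rule variable or a constructor application, and σ maps x to a constructor
pattern c(z₁,…,z_k) with fresh variables (identity elsewhere), then
dist(tσ, l) < dist(t, l). -/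
theorem dist_after_splitting_decreases
    (Δ1 Δ2 Cs fresh : Finset ℕ) (t l : Tm)
    (S S' : Finset (Option (List Bool)))
    (σ : ℕ → Tm) (x : ℕ) (hx1 : x ∈ Δ1)
    (hS : SM Δ1 Δ2 t l [] S) (hbot : none ∉ S)
    (p : List Bool) (hp : some p ∈ S) (hxt : subtermAt t p = some (Tm.var x))
    (hsafe : (∃ y ∈ Δ2, subtermAt l p = some (Tm.var y)) ∨
             (∃ u, subtermAt l p = some u ∧ ∃ c ∈ Cs, headConst u = some c))
    (hσx : ConstrPat Cs fresh (σ x))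
    (hσid : ∀ y, y ≠ x → σ y = Tm.var y)
    (hfresh : ∀ y ∈ fresh, y ∉ t.fv ∪ l.fv ∪ Δ1 ∪ Δ2)
    (hS' : SM ((Δ1.erase x) ∪ fresh) Δ2 (subst σ t) l [] S') :
    dist l S' < dist l S :=
  dist_after_splitting_decreases_general Δ1 Δ2 Cs fresh t l S S' σ x hx1 hS hbot p hp hxt hσx hσid
    hfresh hS'
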